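/- arXiv:2512.12125 — 2 statements merged into one kernel-verified Lean document; each statement's English description precedes it below -/
import Mathlib

section
/- Let y be the D×(N−D) matrix over GF(q) with (1,1)-entry 1 and zeros elsewhere, and let z be a matrix with rank(z) = rank(z−y) = i. Then rank(⌜z) ∈ {i−2, i−1}, rank(|z) ∈ {i−1, i}, and rank(z̄) ∈ {i−1, i}, where |z, z̄, ⌜z denote z with first column, first row, and both zeroed respectively. Moreover the possible combinations (rank(|z), rank(z̄), rank(⌜z)) are exactly (i−1, i−1, i−2), (i−1, i−1, i−1), (i, i−1, i−1), and (i−1, i, i−1). -/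
/-!
Deleting a row or a column changes the rank by at most one; of the triples this allows, the
listed ones are all except those with `rank |z = rank z̄ = i`. These are impossible: if deleting
the first column keeps the rank, the first column `z₁` lies in the span of the others; if deleting
the first row keeps the rank, `e₁` is not in the column space of `z` (the projection killing the
first coordinate is injective on it). The matrix `z - y` has the same other columns and first
column `z₁ - e₁`, so its column space contains the column space of `z` and `e₁`, whence
`rank (z - y) > rank z`.
-/

noncomputable section

open Matrix

/-- The `D × m` matrix with `(1,1)`-entry `1` and all other entries `0`. -/
def yMat (F : Type) [Field F] (D m : ℕ) : Matrix (Fin D) (Fin m) F :=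
  Matrix.of fun i j => if (i : ℕ) = 0 ∧ (j : ℕ) = 0 then 1 else 0

/-- `z` with its first column replaced by zeros. -/
def zeroCol {F : Type} [Field F] {D m : ℕ} (z : Matrix (Fin D) (Fin m) F) :
    Matrix (Fin D) (Fin m) F :=
  Matrix.of fun i j => if (j : ℕ) = 0 then 0 else z i j

/-- `z` with its first row replaced by zeros. -/
def zeroRow {F : Type} [Field F] {D m : ℕ} (z : Matrix (Fin D) (Fin m) F) :
    Matrix (Fin D) (Fin m) F :=
  Matrix.of fun i j => if (i : ℕ) = 0 then 0 else z i j

/-- `z` with both its first row and first column replaced by zeros. -/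
def zeroBoth {F : Type} [Field F] {D m : ℕ} (z : Matrix (Fin D) (Fin m) F) :
    Matrix (Fin D) (Fin m) F :=
  Matrix.of fun i j => if (i : ℕ) = 0 ∨ (j : ℕ) = 0 then 0 else z i j

open Submodule Function Module

namespace Submodule

variable {K V ι : Type*} [Field K] [AddCommGroup V] [Module K V] [DecidableEq ι]

lemma span_range_update_le (v : ι → V) (j : ι) (w : V) :
    span K (Set.range (update v j w)) ≤ span K (Set.range v) ⊔ K ∙ w := by
  rw [span_le]
  rintro _ ⟨k, rfl⟩
  rcases eq_or_ne k j with rfl | hk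
  · simpa using mem_sup_right (mem_span_singleton_self w)
  · simpa [hk] using mem_sup_left (subset_span (Set.mem_range_self k))

lemma finrank_sup_span_singleton_le [FiniteDimensional K V] (p : Submodule K V) (v : V) :
    finrank K ↥(p ⊔ K ∙ v) ≤ finrank K p + 1 := by
  by_cases hv : v ∈ p
  · rw [sup_eq_left.mpr ((span_singleton_le_iff_mem v p).mpr hv)]
    exact Nat.le_succ _
  · exact (finrank_sup_span_singleton hv).le

variable [FiniteDimensional K V]

lemma finrank_span_range_update_zero_le (v : ι → V) (j : ι) :
    finrank K (span K (Set.range (update v j 0))) ≤ finrank K (span K (Set.range v)) :=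
  finrank_mono (by simpa using span_range_update_le v j 0)

lemma finrank_span_range_le_update_add_one (v : ι → V) (j : ι) (w : V) :
    finrank K (span K (Set.range v)) ≤ finrank K (span K (Set.range (update v j w))) + 1 := by
  have h := span_range_update_le (K := K) (update v j w) j (v j)
  rw [update_idem, update_eq_self] at h
  exact (finrank_mono h).trans (finrank_sup_span_singleton_le _ _)

lemma finrank_span_range_lt_update_sub {v : ι → V} {j : ι} {e : V}
    (hv : finrank K (span K (Set.range (update v j 0))) = finrank K (span K (Set.range v)))
    (he : e ∉ span K (Set.range v)) :
    finrank K (span K (Set.range v)) < finrank K (span K (Set.range (update v j (v j - e)))) := by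
  set W := span K (Set.range (update v j (v j - e)))
  have hspan : span K (Set.range (update v j 0)) = span K (Set.range v) :=
    eq_of_le_of_finrank_eq (by simpa using span_range_update_le v j 0) hv
  have hle : span K (Set.range v) ≤ W := by
    rw [← hspan, ← update_idem (v j - e) 0 v]
    simpa using span_range_update_le (K := K) (update v j (v j - e)) j 0
  have heW : e ∈ W := by
    have hj : v j - e ∈ W := subset_span ⟨j, update_self j _ v⟩
    simpa using sub_mem (hle (subset_span ⟨j, rfl⟩)) hj
  calc finrank K (span K (Set.range v)) < finrank K ↥(span K (Set.range v) ⊔ K ∙ e) := by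
        rw [finrank_sup_span_singleton he]; exact Nat.lt_succ_self _
    _ ≤ finrank K W := finrank_mono (sup_le hle ((span_singleton_le_iff_mem e W).mpr heW))

lemma finrank_map_lt {W : Type*} [AddCommGroup W] [Module K W] (f : V →ₗ[K] W)
    {S : Submodule K V} {x : V} (hxS : x ∈ S) (hx : x ≠ 0) (hfx : f x = 0) :
    finrank K (S.map f) < finrank K S := by
  have h := (f.domRestrict S).finrank_range_add_finrank_ker
  rw [LinearMap.range_domRestrict] at h
  have hker : finrank K (LinearMap.ker (f.domRestrict S)) ≠ 0 := by
    rw [Ne, Submodule.finrank_eq_zero, eq_bot_iff]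
    intro hbot
    have := hbot (show (⟨x, hxS⟩ : S) ∈ LinearMap.ker (f.domRestrict S) from hfx)
    exact hx (by simpa using this)
  omega

end Submodule

namespace Matrix

lemma col_updateCol {α m n : Type*} [DecidableEq n] (A : Matrix m n α) (j : n) (c : m → α) :
    (A.updateCol j c).col = update A.col j c := by
  ext k l
  rcases eq_or_ne k j with rfl | hk <;> simp [*]

lemma col_sub_single {α m n : Type*} [AddGroup α] [DecidableEq m] [DecidableEq n]
    (A : Matrix m n α) (i : m) (j : n) (c : α) :
    (A - single i j c).col = update A.col j (A.col j - Pi.single i c) := by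
  ext k l
  simp only [col_apply, sub_apply, single_apply, update_apply]
  split_ifs <;> simp_all

variable {K m n : Type*} [Field K] [Fintype m] [Fintype n]

lemma rank_updateCol_zero_le [DecidableEq n] (A : Matrix m n K) (j : n) :
    (A.updateCol j 0).rank ≤ A.rank := by
  rw [rank_eq_finrank_span_cols, rank_eq_finrank_span_cols, col_updateCol]
  exact finrank_span_range_update_zero_le A.col j

lemma rank_le_rank_updateCol_add_one [DecidableEq n] (A : Matrix m n K) (j : n) (c : m → K) :
    A.rank ≤ (A.updateCol j c).rank + 1 := by
  rw [rank_eq_finrank_span_cols, rank_eq_finrank_span_cols, col_updateCol]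
  exact finrank_span_range_le_update_add_one A.col j c

lemma rank_updateRow_zero_le [DecidableEq m] (A : Matrix m n K) (i : m) :
    (A.updateRow i 0).rank ≤ A.rank := by
  have h := rank_updateCol_zero_le Aᵀ i
  rwa [updateCol_transpose, rank_transpose, rank_transpose] at h

lemma rank_le_rank_updateRow_add_one [DecidableEq m] (A : Matrix m n K) (i : m) (b : n → K) :
    A.rank ≤ (A.updateRow i b).rank + 1 := by
  have h := rank_le_rank_updateCol_add_one Aᵀ i b
  rwa [updateCol_transpose, rank_transpose, rank_transpose] at h

omit [Fintype n] in
lemma updateRow_zero_eq_diagonal_mul [DecidableEq m] (A : Matrix m n K) (i : m) :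
    A.updateRow i 0 = diagonal (update (1 : m → K) i 0) * A := by
  ext k l
  rcases eq_or_ne k i with rfl | hk <;> simp [*]

lemma rank_updateRow_zero_lt [DecidableEq m] {A : Matrix m n K} {i : m} {c : K} (hc : c ≠ 0)
    (h : Pi.single i c ∈ span K (Set.range A.col)) : (A.updateRow i 0).rank < A.rank := by
  rw [updateRow_zero_eq_diagonal_mul, rank, mulVecLin_mul, LinearMap.range_comp, rank,
    range_mulVecLin]
  refine finrank_map_lt _ h (by simpa using hc) ?_
  ext k
  rcases eq_or_ne k i with rfl | hk <;> simp [*]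

theorem rank_lt_rank_sub_single [DecidableEq m] [DecidableEq n] {A : Matrix m n K} {i : m} {j : n}
    {c : K} (hc : c ≠ 0) (hcol : (A.updateCol j 0).rank = A.rank)
    (hrow : (A.updateRow i 0).rank = A.rank) :
    A.rank < (A - single i j c).rank := by
  rw [rank_eq_finrank_span_cols, rank_eq_finrank_span_cols, col_sub_single]
  rw [rank_eq_finrank_span_cols, rank_eq_finrank_span_cols, col_updateCol] at hcol
  exact finrank_span_range_lt_update_sub hcol fun h => (rank_updateRow_zero_lt hc h).ne hrow

end Matrix

section ZeroRowCol

variable {F : Type} [Field F] {D m : ℕ} (z : Matrix (Fin D) (Fin m) F)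

lemma zeroCol_eq_updateCol (hm : 0 < m) : zeroCol z = z.updateCol ⟨0, hm⟩ 0 := by
  ext k l
  simp [zeroCol, updateCol_apply, Fin.ext_iff]

lemma zeroRow_eq_updateRow (hD : 0 < D) : zeroRow z = z.updateRow ⟨0, hD⟩ 0 := by
  ext k l
  simp [zeroRow, updateRow_apply, Fin.ext_iff]

lemma zeroBoth_eq_updateRow_zeroCol (hD : 0 < D) :
    zeroBoth z = (zeroCol z).updateRow ⟨0, hD⟩ 0 := by
  ext k l
  by_cases hk : (k : ℕ) = 0 <;> simp [zeroBoth, zeroCol, updateRow_apply, Fin.ext_iff, hk]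

lemma zeroBoth_eq_updateCol_zeroRow (hm : 0 < m) :
    zeroBoth z = (zeroRow z).updateCol ⟨0, hm⟩ 0 := by
  ext k l
  by_cases hl : (l : ℕ) = 0 <;> simp [zeroBoth, zeroRow, updateCol_apply, Fin.ext_iff, hl]

omit z in
lemma yMat_eq_single (hD : 0 < D) (hm : 0 < m) : yMat F D m = single ⟨0, hD⟩ ⟨0, hm⟩ 1 := by
  ext k l
  simp [yMat, single_apply, Fin.ext_iff, eq_comm]

end ZeroRowCol

theorem stmt_8_general (F : Type) [Field F] (D N : ℕ)
    (i : ℕ) (hi1 : 1 ≤ i)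
    (z : Matrix (Fin D) (Fin (N - D)) F)
    (hz : z.rank = i) (hzy : (z - yMat F D (N - D)).rank = i) :
    ((zeroBoth z).rank = i - 2 ∨ (zeroBoth z).rank = i - 1) ∧
    ((zeroCol z).rank = i - 1 ∨ (zeroCol z).rank = i) ∧
    ((zeroRow z).rank = i - 1 ∨ (zeroRow z).rank = i) ∧
    (((zeroCol z).rank, (zeroRow z).rank, (zeroBoth z).rank) = (i - 1, i - 1, i - 2) ∨
     ((zeroCol z).rank, (zeroRow z).rank, (zeroBoth z).rank) = (i - 1, i - 1, i - 1) ∨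
     ((zeroCol z).rank, (zeroRow z).rank, (zeroBoth z).rank) = (i, i - 1, i - 1) ∨
     ((zeroCol z).rank, (zeroRow z).rank, (zeroBoth z).rank) = (i - 1, i, i - 1)) := by
  have hD : 0 < D := hi1.trans (hz ▸ rank_le_height z)
  have hm : 0 < N - D := hi1.trans (hz ▸ rank_le_width z)
  have hcol₁ := rank_updateCol_zero_le z ⟨0, hm⟩
  have hcol₂ := rank_le_rank_updateCol_add_one z ⟨0, hm⟩ 0
  have hrow₁ := rank_updateRow_zero_le z ⟨0, hD⟩
  have hrow₂ := rank_le_rank_updateRow_add_one z ⟨0, hD⟩ 0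
  have hbc₁ := rank_updateRow_zero_le (zeroCol z) ⟨0, hD⟩
  have hbc₂ := rank_le_rank_updateRow_add_one (zeroCol z) ⟨0, hD⟩ 0
  have hbr₁ := rank_updateCol_zero_le (zeroRow z) ⟨0, hm⟩
  have hbr₂ := rank_le_rank_updateCol_add_one (zeroRow z) ⟨0, hm⟩ 0
  rw [← zeroCol_eq_updateCol z hm] at hcol₁ hcol₂
  rw [← zeroRow_eq_updateRow z hD] at hrow₁ hrow₂
  rw [← zeroBoth_eq_updateRow_zeroCol z hD] at hbc₁ hbc₂
  rw [← zeroBoth_eq_updateCol_zeroRow z hm] at hbr₁ hbr₂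
  have hnot : ¬((zeroCol z).rank = i ∧ (zeroRow z).rank = i) := by
    rintro ⟨hcol, hrow⟩
    rw [zeroCol_eq_updateCol z hm, ← hz] at hcol
    rw [zeroRow_eq_updateRow z hD, ← hz] at hrow
    have h := rank_lt_rank_sub_single one_ne_zero hcol hrow
    rw [← yMat_eq_single hD hm, hzy, hz] at h
    exact lt_irrefl i h
  simp only [Prod.mk.injEq]
  omega

theorem stmt_8 (F : Type) [Field F] [Fintype F] (D N : ℕ)
    (hq : Fintype.card F ≠ 2) (h1 : N > 2 * D) (h2 : 2 * D ≥ 6)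
    (i : ℕ) (hi1 : 1 ≤ i) (hi2 : i ≤ D)
    (z : Matrix (Fin D) (Fin (N - D)) F)
    (hz : z.rank = i) (hzy : (z - yMat F D (N - D)).rank = i) :
    ((zeroBoth z).rank = i - 2 ∨ (zeroBoth z).rank = i - 1) ∧
    ((zeroCol z).rank = i - 1 ∨ (zeroCol z).rank = i) ∧
    ((zeroRow z).rank = i - 1 ∨ (zeroRow z).rank = i) ∧
    (((zeroCol z).rank, (zeroRow z).rank, (zeroBoth z).rank) = (i - 1, i - 1, i - 2) ∨
     ((zeroCol z).rank, (zeroRow z).rank, (zeroBoth z).rank) = (i - 1, i - 1, i - 1) ∨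
     ((zeroCol z).rank, (zeroRow z).rank, (zeroBoth z).rank) = (i, i - 1, i - 1) ∨
     ((zeroCol z).rank, (zeroRow z).rank, (zeroBoth z).rank) = (i - 1, i, i - 1)) :=
  stmt_8_general F D N i hi1 z hz hzy

end
end

section
/- Let y be the D×(N−D) matrix over GF(q) with (1,1)-entry 1 and zeros elsewhere. If z is a matrix with rank(z) = rank(z−y) = i, rank(|z) = i−1, rank(z̄) = i−1, rank(⌜z) = i−1, then the number of common neighbors w of 0 and y (rank(w) = rank(w−y) = 1) satisfying rank(z−w) = i−1 equals 2q^{i−1} − 1, and there are no such w with rank(z−w) = i+1. -/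
noncomputable section

open Matrix

/-!
A matrix `w` with `rank w = rank (w - y) = 1` is supported on the first column or on the first
row: the `2 × 2` minors of `w` and of `w - y` through the `(1,1)` entry differ exactly by the
entry `w i j` opposite to it. For `w = x e₁ᵀ` the columns of `z - w` are those of `z`, except
the first one, which becomes `z₁ - x`. If `V` is the span of the other columns of `z`
(of dimension `rank |z = i - 1`), then `rank (z - w) = i - 1 + [z₁ - x ∉ V]`. Hence
`rank (z - w) ≤ i`, with equality `i - 1` exactly for the `q^(i-1)` vectors `x ∈ z₁ + V`, which
are all admissible because `rank z = rank (z - y) = i`. The first-row case is the same argument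
for `zᵀ`. The two families meet in the multiples `c • y` with `z₁ - c e₁ ∈ V`, and there is
exactly one such `c`: `e₁ ∉ V` because erasing the first row does not lower `rank |z`, while `e₁`
lies in the column space of `z` because erasing the first row lowers `rank z`; the exchange
lemma then yields `c`. Inclusion–exclusion gives `2 q^(i-1) - 1`.
-/
open Matrix Submodule Module Set

section LinearAlgebra

variable {K E : Type*} [Field K] [AddCommGroup E] [Module K E]

open scoped Classical in
theorem finrank_span_insert [Module.Finite K E] (v : E) (s : Set E) :
    finrank K (span K (insert v s)) = finrank K (span K s) + if v ∈ span K s then 0 else 1 := by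
  rw [span_insert, sup_comm]
  split_ifs with hv
  · rw [sup_eq_left.mpr ((span_singleton_le_iff_mem _ _).mpr hv), add_zero]
  · exact finrank_sup_span_singleton hv

theorem existsUnique_sub_smul_mem_span {x y : E} {s : Set E} (hy : y ∈ span K (insert x s))
    (hys : y ∉ span K s) : ∃! c : K, x - c • y ∈ span K s := by
  obtain ⟨c, v, hv, hx⟩ := mem_span_insert.mp (mem_span_insert_exchange hy hys)
  have hc : x - c • y ∈ span K s := by rwa [hx, add_sub_cancel_left]
  refine ⟨c, hc, fun c' hc' => ?_⟩
  by_contra hne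
  have hdiff : (c - c') • y ∈ span K s := by
    convert sub_mem hc' hc using 1
    rw [sub_smul]; abel
  exact hys ((smul_mem_iff _ (sub_ne_zero.mpr (Ne.symm hne))).mp hdiff)

theorem ncard_setOf_sub_mem [Finite K] [Module.Finite K E] (a : E) (V : Submodule K E) :
    {x | a - x ∈ V}.ncard = Nat.card K ^ finrank K V := by
  rw [← natCard_eq_pow_finrank, ← SetLike.coe_sort_coe, Nat.card_coe_set_eq]
  exact ncard_preimage_of_injective_subset_range (sub_right_injective (b := a))
    fun v _ => ⟨a - v, sub_sub_cancel a v⟩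

theorem notMem_iff_finrank_map_eq {E' : Type*} [AddCommGroup E'] [Module K E']
    [Module.Finite K E] (f : E →ₗ[K] E') {v : E} (hv : v ≠ 0) (hker : LinearMap.ker f = K ∙ v)
    (W : Submodule K E) : v ∉ W ↔ finrank K (W.map f) = finrank K W := by
  rw [← disjoint_span_singleton' hv, ← hker]
  refine ⟨fun h => ?_, fun h => disjoint_ker_of_finrank_le f h.ge⟩
  rw [← LinearMap.range_domRestrict]
  exact LinearMap.finrank_range_of_inj (LinearMap.injective_domRestrict_iff.mpr h)

end LinearAlgebra

theorem Set.ncard_inter_range {α β : Type*} {f : α → β} (hf : Function.Injective f) (s : Set β) :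
    (s ∩ range f).ncard = (f ⁻¹' s).ncard := by
  rw [← image_preimage_eq_inter_range, ncard_image_of_injective _ hf]

theorem Matrix.exists_eq_vecMulVec_of_rank_le_one {K ι κ : Type*} [Field K] [Fintype ι]
    [Fintype κ] {w : Matrix ι κ K} (h : w.rank ≤ 1) : ∃ u v, w = vecMulVec u v := by
  rw [rank_eq_finrank_span_cols, finrank_le_one_iff] at h
  obtain ⟨u, hu⟩ := h
  choose c hc using fun j => hu ⟨w.col j, subset_span (mem_range_self j)⟩
  refine ⟨u, c, ext fun i j => ?_⟩
  rw [vecMulVec_apply, mul_comm]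
  exact (congrFun (congrArg Subtype.val (hc j)) i).symm

theorem Matrix.mul_eq_mul_of_rank_le_one {K ι κ : Type*} [Field K] [Fintype ι] [Fintype κ]
    {w : Matrix ι κ K} (h : w.rank ≤ 1) (i k : ι) (j l : κ) :
    w i j * w k l = w i l * w k j := by
  obtain ⟨u, v, rfl⟩ := exists_eq_vecMulVec_of_rank_le_one h
  simp only [vecMulVec_apply]; ring

section Columns

variable {F : Type} [Field F] {n m : ℕ} [NeZero m]

def tailColSpan (A : Matrix (Fin n) (Fin m) F) : Submodule F (Fin n → F) :=
  span F (A.col '' {0}ᶜ)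

theorem tailColSpan_congr {A B : Matrix (Fin n) (Fin m) F} (h : ∀ j ≠ 0, A.col j = B.col j) :
    tailColSpan A = tailColSpan B := by
  unfold tailColSpan
  congr 1
  exact image_congr fun j hj => h j hj

theorem span_insert_col_zero (A : Matrix (Fin n) (Fin m) F) :
    span F (insert (A.col 0) (A.col '' {0}ᶜ)) = span F (range A.col) := by
  rw [insert_image_compl_eq_range]

open scoped Classical in
theorem rank_eq_finrank_tailColSpan_add (A : Matrix (Fin n) (Fin m) F) :
    A.rank = finrank F (tailColSpan A) + if A.col 0 ∈ tailColSpan A then 0 else 1 := by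
  rw [rank_eq_finrank_span_cols, ← span_insert_col_zero, finrank_span_insert]; rfl

theorem rank_zeroCol (A : Matrix (Fin n) (Fin m) F) :
    (zeroCol A).rank = finrank F (tailColSpan A) := by
  have hcol : ∀ j ≠ 0, (zeroCol A).col j = A.col j := fun j hj => by
    ext i; simp [zeroCol, Matrix.col, hj]
  have hcol0 : (zeroCol A).col 0 = 0 := by ext i; simp [zeroCol, Matrix.col]
  rw [rank_eq_finrank_tailColSpan_add, hcol0, if_pos (zero_mem _), tailColSpan_congr hcol,
    add_zero]

open scoped Classical in
theorem rank_sub_vecMulVec_single (A : Matrix (Fin n) (Fin m) F) (x : Fin n → F) :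
    (A - vecMulVec x (Pi.single 0 1)).rank
      = (zeroCol A).rank + if A.col 0 - x ∈ tailColSpan A then 0 else 1 := by
  have hcol : ∀ j ≠ 0, (A - vecMulVec x (Pi.single 0 1)).col j = A.col j := fun j hj => by
    ext i; simp [Matrix.col, vecMulVec_apply, hj]
  have hcol0 : (A - vecMulVec x (Pi.single 0 1)).col 0 = A.col 0 - x := by
    ext i; simp [Matrix.col, vecMulVec_apply]
  rw [rank_eq_finrank_tailColSpan_add, hcol0, tailColSpan_congr hcol, rank_zeroCol]

theorem rank_sub_vecMulVec_single_le (A : Matrix (Fin n) (Fin m) F) (x : Fin n → F) :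
    (A - vecMulVec x (Pi.single 0 1)).rank ≤ (zeroCol A).rank + 1 := by
  rw [rank_sub_vecMulVec_single]; split_ifs <;> omega

theorem rank_sub_vecMulVec_single_eq_iff (A : Matrix (Fin n) (Fin m) F) (x : Fin n → F) :
    (A - vecMulVec x (Pi.single 0 1)).rank = (zeroCol A).rank ↔ A.col 0 - x ∈ tailColSpan A := by
  rw [rank_sub_vecMulVec_single]; split_ifs with h <;> simp [h]

theorem rank_vecMulVec_single {x : Fin n → F} (hx : x ≠ 0) :
    (vecMulVec x (Pi.single 0 1) : Matrix (Fin n) (Fin m) F).rank = 1 := by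
  have hzero : zeroCol (0 : Matrix (Fin n) (Fin m) F) = 0 := by ext i j; simp [zeroCol]
  have hbot : tailColSpan (0 : Matrix (Fin n) (Fin m) F) = ⊥ := by
    rw [← finrank_eq_zero, ← rank_zeroCol, hzero, rank_zero]
  have h := rank_sub_vecMulVec_single (0 : Matrix (Fin n) (Fin m) F) (-x)
  rw [zero_sub, ← neg_vecMulVec, neg_neg, hzero, rank_zero, hbot] at h
  rwa [show (0 : Matrix (Fin n) (Fin m) F).col 0 = 0 from rfl, zero_sub, neg_neg, mem_bot,
    if_neg hx] at h

end Columns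

section FirstRow

variable {F : Type} [Field F] {n m : ℕ} [NeZero n]

-- Phrased with `(i : ℕ) = 0`, as in `zeroRow`, so that `(zeroRow A).col j = eraseFirst (A.col j)`
-- holds by `rfl`.
def eraseFirst : (Fin n → F) →ₗ[F] (Fin n → F) where
  toFun x i := if (i : ℕ) = 0 then 0 else x i
  map_add' x y := by ext i; by_cases hi : i = 0 <;> simp [hi]
  map_smul' c x := by ext i; by_cases hi : i = 0 <;> simp [hi]

theorem ker_eraseFirst :
    LinearMap.ker (eraseFirst : (Fin n → F) →ₗ[F] _) = F ∙ Pi.single 0 1 := by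
  ext x
  simp only [LinearMap.mem_ker, mem_span_singleton]
  constructor
  · intro h
    refine ⟨x 0, funext fun i => ?_⟩
    by_cases hi : i = 0
    · simp [hi]
    · simpa [eraseFirst, hi, eq_comm] using congrFun h i
  · rintro ⟨c, rfl⟩
    ext i
    by_cases hi : i = 0 <;> simp [eraseFirst, hi]

theorem map_eraseFirst_span_col_image (A : Matrix (Fin n) (Fin m) F) (s : Set (Fin m)) :
    (span F (A.col '' s)).map eraseFirst = span F ((zeroRow A).col '' s) := by
  rw [map_span, image_image]; rfl

theorem zeroCol_zeroRow (A : Matrix (Fin n) (Fin m) F) : zeroCol (zeroRow A) = zeroBoth A := by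
  ext i j
  simp only [zeroCol, zeroRow, zeroBoth, of_apply]
  split_ifs <;> simp_all

theorem single_mem_span_range_col {A : Matrix (Fin n) (Fin m) F}
    (h : (zeroRow A).rank < A.rank) : Pi.single 0 1 ∈ span F (range A.col) := by
  by_contra hmem
  rw [notMem_iff_finrank_map_eq eraseFirst (Pi.single_ne_zero_iff.2 one_ne_zero) ker_eraseFirst,
    ← image_univ, map_eraseFirst_span_col_image] at hmem
  rw [Set.image_univ, Set.image_univ, ← rank_eq_finrank_span_cols,
    ← rank_eq_finrank_span_cols] at hmem
  omega

variable [NeZero m]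

theorem single_notMem_tailColSpan {A : Matrix (Fin n) (Fin m) F}
    (h : (zeroBoth A).rank = (zeroCol A).rank) : Pi.single 0 1 ∉ tailColSpan A := by
  rw [notMem_iff_finrank_map_eq eraseFirst (Pi.single_ne_zero_iff.2 one_ne_zero) ker_eraseFirst,
    tailColSpan, map_eraseFirst_span_col_image]
  change finrank F (tailColSpan (zeroRow A)) = finrank F (tailColSpan A)
  rw [← rank_zeroCol, ← rank_zeroCol, zeroCol_zeroRow, h]

theorem existsUnique_col_zero_sub_smul_single_mem {A : Matrix (Fin n) (Fin m) F}
    (hr : (zeroRow A).rank < A.rank) (hb : (zeroBoth A).rank = (zeroCol A).rank) :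
    ∃! c : F, A.col 0 - c • Pi.single 0 1 ∈ tailColSpan A :=
  existsUnique_sub_smul_mem_span
    (by rw [span_insert_col_zero]; exact single_mem_span_range_col hr)
    (single_notMem_tailColSpan hb)

end FirstRow

section Transpose

variable {F : Type} [Field F] {n m : ℕ}

theorem yMat_transpose : (yMat F n m)ᵀ = yMat F m n := by
  ext i j; simp [yMat, and_comm]

theorem zeroRow_transpose (A : Matrix (Fin n) (Fin m) F) : (zeroRow A)ᵀ = zeroCol Aᵀ := rfl

end Transpose

def commonNbrs {F : Type} [Field F] {n m : ℕ} (z : Matrix (Fin n) (Fin m) F) (k : ℕ) :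
    Set (Matrix (Fin n) (Fin m) F) :=
  {w | w.rank = 1 ∧ (w - yMat F n m).rank = 1 ∧ (z - w).rank = k}

section CommonNbrs

variable {F : Type} [Field F] {n m : ℕ}

theorem transpose_mem_commonNbrs_transpose_iff {z w : Matrix (Fin n) (Fin m) F} {k : ℕ} :
    wᵀ ∈ commonNbrs zᵀ k ↔ w ∈ commonNbrs z k := by
  change wᵀ.rank = 1 ∧ (wᵀ - yMat F m n).rank = 1 ∧ (zᵀ - wᵀ).rank = k ↔ _
  rw [← yMat_transpose, ← transpose_sub, ← transpose_sub, rank_transpose, rank_transpose,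
    rank_transpose]
  rfl

theorem vecMulVec_single_right_mem_commonNbrs_iff [NeZero n] {z : Matrix (Fin n) (Fin m) F}
    {k : ℕ} (g : Fin m → F) :
    vecMulVec (Pi.single 0 1) g ∈ commonNbrs z k ↔
      vecMulVec g (Pi.single 0 1) ∈ commonNbrs zᵀ k := by
  rw [← transpose_mem_commonNbrs_transpose_iff, transpose_vecMulVec]

variable [NeZero m]

theorem vecMulVec_single_left_injective :
    Function.Injective (vecMulVec · (Pi.single 0 1) : (Fin n → F) → Matrix (Fin n) (Fin m) F) :=
  fun x y h => funext fun i => by simpa [vecMulVec_apply] using congrFun (congrFun h i) 0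

theorem vecMulVec_single_notMem_commonNbrs {z : Matrix (Fin n) (Fin m) F} {l : ℕ}
    (hl : (zeroCol z).rank + 1 < l) (x : Fin n → F) :
    vecMulVec x (Pi.single 0 1) ∉ commonNbrs z l := fun hx => by
  have := rank_sub_vecMulVec_single_le z x
  have := hx.2.2
  omega

variable [NeZero n]

theorem yMat_eq_vecMulVec : yMat F n m = vecMulVec (Pi.single 0 1) (Pi.single 0 1) := by
  ext i j
  by_cases hi : i = 0 <;> by_cases hj : j = 0 <;> simp [yMat, vecMulVec_apply, hi, hj]

theorem apply_eq_zero_of_rank_le_one_of_rank_sub_yMat_le_one {w : Matrix (Fin n) (Fin m) F}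
    (h : w.rank ≤ 1) (hy : (w - yMat F n m).rank ≤ 1) {i : Fin n} {j : Fin m} (hi : i ≠ 0)
    (hj : j ≠ 0) : w i j = 0 := by
  have h₁ := mul_eq_mul_of_rank_le_one h 0 i 0 j
  have h₂ := mul_eq_mul_of_rank_le_one hy 0 i 0 j
  simp only [yMat_eq_vecMulVec, Matrix.sub_apply, vecMulVec_apply, Pi.single_apply, hi, hj,
    if_true, if_false, mul_one, mul_zero, sub_zero] at h₂
  linear_combination h₁ - h₂

theorem mem_range_vecMulVec_single_of_rank_le_one {w : Matrix (Fin n) (Fin m) F}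
    (h : w.rank ≤ 1) (hy : (w - yMat F n m).rank ≤ 1) :
    w ∈ range (vecMulVec · (Pi.single 0 1)) ∪ range (vecMulVec (Pi.single 0 1)) := by
  have hw := fun i j (hi : i ≠ 0) (hj : j ≠ 0) =>
    apply_eq_zero_of_rank_le_one_of_rank_sub_yMat_le_one h hy hi hj
  by_cases hrow : ∀ j ≠ 0, w 0 j = 0
  · refine Or.inl ⟨w.col 0, ext fun i j => ?_⟩
    by_cases hj : j = 0
    · simp [hj, vecMulVec_apply, Matrix.col]
    by_cases hi : i = 0
    · simp [hj, vecMulVec_apply, hi, hrow j hj]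
    · simp [hj, vecMulVec_apply, hw i j hi hj]
  · push Not at hrow
    obtain ⟨j₀, hj₀, hw₀⟩ := hrow
    have hcol : ∀ i ≠ 0, w i 0 = 0 := fun i hi => by
      have := mul_eq_mul_of_rank_le_one h 0 i 0 j₀
      rw [hw i j₀ hi hj₀, mul_zero] at this
      exact (mul_eq_zero.mp this.symm).resolve_left hw₀
    refine Or.inr ⟨w 0, ext fun i j => ?_⟩
    by_cases hi : i = 0
    · simp [hi, vecMulVec_apply]
    by_cases hj : j = 0
    · simp [hi, hj, vecMulVec_apply, hcol i hi]
    · simp [hi, vecMulVec_apply, hw i j hi hj]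

theorem commonNbrs_subset (z : Matrix (Fin n) (Fin m) F) (k : ℕ) :
    commonNbrs z k ⊆ range (vecMulVec · (Pi.single 0 1)) ∪ range (vecMulVec (Pi.single 0 1)) :=
  fun _ hw => mem_range_vecMulVec_single_of_rank_le_one hw.1.le hw.2.1.le

theorem vecMulVec_single_mem_commonNbrs_iff {z : Matrix (Fin n) (Fin m) F} {k : ℕ}
    (hc : (zeroCol z).rank = k) (hz : z.rank ≠ k) (hzy : (z - yMat F n m).rank ≠ k)
    (x : Fin n → F) :
    vecMulVec x (Pi.single 0 1) ∈ commonNbrs z k ↔ z.col 0 - x ∈ tailColSpan z := by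
  subst hc
  rw [← rank_sub_vecMulVec_single_eq_iff]
  refine ⟨fun h => h.2.2, fun h => ⟨rank_vecMulVec_single ?_, ?_, h⟩⟩
  · rintro rfl
    rw [zero_vecMulVec, sub_zero] at h
    exact hz h
  · rw [yMat_eq_vecMulVec, ← sub_vecMulVec]
    refine rank_vecMulVec_single (sub_ne_zero.mpr ?_)
    rintro rfl
    rw [← yMat_eq_vecMulVec] at h
    exact hzy h

end CommonNbrs

section Counting

variable {F : Type} [Field F] {n m : ℕ} [NeZero n]

theorem vecMulVec_single_right_injective :
    Function.Injective (vecMulVec (Pi.single 0 1) : (Fin m → F) → Matrix (Fin n) (Fin m) F) :=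
  fun x y h => funext fun j => by simpa [vecMulVec_apply] using congrFun (congrFun h 0) j

variable [NeZero m]

theorem range_vecMulVec_single_inter_range :
    range (vecMulVec · (Pi.single 0 1)) ∩ range (vecMulVec (Pi.single 0 1))
      = range fun c : F =>
          (vecMulVec (c • Pi.single 0 1) (Pi.single 0 1) : Matrix (Fin n) (Fin m) F) := by
  ext w
  constructor
  · rintro ⟨⟨x, rfl⟩, g, hg⟩
    refine ⟨x 0, congrArg (vecMulVec · _) (funext fun i => ?_)⟩
    by_cases hi : i = 0
    · simp [hi]
    · simpa [vecMulVec_apply, hi, eq_comm] using congrFun (congrFun hg i) 0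
  · rintro ⟨c, rfl⟩
    exact ⟨⟨_, rfl⟩, c • Pi.single 0 1, by simp only [vecMulVec_smul, smul_vecMulVec]⟩

theorem commonNbrs_eq_empty {z : Matrix (Fin n) (Fin m) F} {l : ℕ}
    (hc : (zeroCol z).rank + 1 < l) (hr : (zeroRow z).rank + 1 < l) : commonNbrs z l = ∅ := by
  refine eq_empty_of_forall_notMem fun w hw => ?_
  rcases commonNbrs_subset z l hw with ⟨x, rfl⟩ | ⟨g, rfl⟩
  · exact vecMulVec_single_notMem_commonNbrs hc x hw
  · rw [vecMulVec_single_right_mem_commonNbrs_iff] at hw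
    exact vecMulVec_single_notMem_commonNbrs (by rwa [← zeroRow_transpose, rank_transpose]) g hw

variable {z : Matrix (Fin n) (Fin m) F} {k : ℕ}

theorem ncard_commonNbrs_inter_range_smul_yMat (hc : (zeroCol z).rank = k) (hz : z.rank ≠ k)
    (hzy : (z - yMat F n m).rank ≠ k) (hr : (zeroRow z).rank < z.rank)
    (hb : (zeroBoth z).rank = k) :
    (commonNbrs z k ∩ range fun c : F =>
      (vecMulVec (c • Pi.single 0 1) (Pi.single 0 1) : Matrix (Fin n) (Fin m) F)).ncard = 1 := by
  rw [ncard_inter_range fun a b h => smul_left_injective F (Pi.single_ne_zero_iff.2 one_ne_zero)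
    (vecMulVec_single_left_injective h), ncard_eq_one]
  obtain ⟨c, hcmem, huniq⟩ := existsUnique_col_zero_sub_smul_single_mem hr (hb.trans hc.symm)
  refine ⟨c, ext fun c' => ?_⟩
  rw [mem_preimage, vecMulVec_single_mem_commonNbrs_iff hc hz hzy, mem_singleton_iff]
  exact ⟨huniq c', fun h => h ▸ hcmem⟩

variable [Fintype F]

theorem ncard_preimage_vecMulVec_single_commonNbrs (hc : (zeroCol z).rank = k)
    (hz : z.rank ≠ k) (hzy : (z - yMat F n m).rank ≠ k) :
    ((vecMulVec · (Pi.single 0 1)) ⁻¹' commonNbrs z k).ncard = Fintype.card F ^ k := by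
  rw [show (vecMulVec · (Pi.single 0 1)) ⁻¹' commonNbrs z k = {x | z.col 0 - x ∈ tailColSpan z}
      from ext (vecMulVec_single_mem_commonNbrs_iff hc hz hzy),
    ncard_setOf_sub_mem, ← rank_zeroCol, hc, Nat.card_eq_fintype_card]

theorem ncard_commonNbrs_add_one (hz : z.rank = k + 1) (hzy : (z - yMat F n m).rank = k + 1)
    (hc : (zeroCol z).rank = k) (hr : (zeroRow z).rank = k) (hb : (zeroBoth z).rank = k) :
    (commonNbrs z k).ncard + 1 = 2 * Fintype.card F ^ k := by
  have hcT : (zeroCol zᵀ).rank = k := by rwa [← zeroRow_transpose, rank_transpose]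
  have hzT : zᵀ.rank = k + 1 := by rwa [rank_transpose]
  have hzyT : (zᵀ - yMat F m n).rank = k + 1 := by
    rwa [← yMat_transpose, ← transpose_sub, rank_transpose]
  set N := commonNbrs z k
  set C : Set (Matrix (Fin n) (Fin m) F) := range (vecMulVec · (Pi.single 0 1))
  set R : Set (Matrix (Fin n) (Fin m) F) := range (vecMulVec (Pi.single 0 1))
  have hcol : (N ∩ C).ncard = Fintype.card F ^ k := by
    rw [ncard_inter_range vecMulVec_single_left_injective]
    exact ncard_preimage_vecMulVec_single_commonNbrs hc (by omega) (by omega)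
  have hrow : (N ∩ R).ncard = Fintype.card F ^ k := by
    rw [ncard_inter_range vecMulVec_single_right_injective,
      show vecMulVec (Pi.single 0 1) ⁻¹' N
        = (vecMulVec · (Pi.single 0 1)) ⁻¹' commonNbrs zᵀ k
        from ext vecMulVec_single_right_mem_commonNbrs_iff]
    exact ncard_preimage_vecMulVec_single_commonNbrs hcT (by omega) (by omega)
  have hboth : (N ∩ C ∩ (N ∩ R)).ncard = 1 := by
    rw [inter_inter_inter_comm, inter_self, range_vecMulVec_single_inter_range]
    exact ncard_commonNbrs_inter_range_smul_yMat hc (by omega) (by omega) (by omega) hb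
  have hsplit : N ∩ C ∪ N ∩ R = N := by
    rw [← inter_union_distrib_left, inter_eq_left.mpr (commonNbrs_subset z k)]
  have := ncard_union_add_ncard_inter (N ∩ C) (N ∩ R)
  rw [hsplit, hcol, hrow, hboth] at this
  omega

end Counting

theorem stmt_18_general (F : Type) [Field F] [Fintype F] (D N : ℕ)
    (i : ℕ) (hi1 : 1 ≤ i)
    (z : Matrix (Fin D) (Fin (N - D)) F)
    (hz : z.rank = i) (hzy : (z - yMat F D (N - D)).rank = i)
    (hc : (zeroCol z).rank = i - 1) (hr : (zeroRow z).rank = i - 1)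
    (hb : (zeroBoth z).rank = i - 1) :
    ({w : Matrix (Fin D) (Fin (N - D)) F |
        w.rank = 1 ∧ (w - yMat F D (N - D)).rank = 1 ∧ (z - w).rank = i - 1}.ncard : ℚ)
      = 2 * (Fintype.card F : ℚ) ^ (i - 1) - 1 ∧
    {w : Matrix (Fin D) (Fin (N - D)) F |
        w.rank = 1 ∧ (w - yMat F D (N - D)).rank = 1 ∧ (z - w).rank = i + 1} = ∅ := by
  have : NeZero D := ⟨by have := z.rank_le_height; omega⟩
  have : NeZero (N - D) := ⟨by have := z.rank_le_width; omega⟩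
  obtain ⟨k, rfl⟩ : ∃ k, i = k + 1 := ⟨i - 1, by omega⟩
  rw [Nat.add_sub_cancel] at hc hr hb ⊢
  refine ⟨?_, commonNbrs_eq_empty (by omega) (by omega)⟩
  rw [eq_sub_iff_add_eq]
  exact_mod_cast ncard_commonNbrs_add_one hz hzy hc hr hb

theorem stmt_18 (F : Type) [Field F] [Fintype F] (D N : ℕ)
    (hq : Fintype.card F ≠ 2) (h1 : N > 2 * D) (h2 : 2 * D ≥ 6)
    (i : ℕ) (hi1 : 1 ≤ i) (hi2 : i ≤ D)
    (z : Matrix (Fin D) (Fin (N - D)) F)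
    (hz : z.rank = i) (hzy : (z - yMat F D (N - D)).rank = i)
    (hc : (zeroCol z).rank = i - 1) (hr : (zeroRow z).rank = i - 1)
    (hb : (zeroBoth z).rank = i - 1) :
    ({w : Matrix (Fin D) (Fin (N - D)) F |
        w.rank = 1 ∧ (w - yMat F D (N - D)).rank = 1 ∧ (z - w).rank = i - 1}.ncard : ℚ)
      = 2 * (Fintype.card F : ℚ) ^ (i - 1) - 1 ∧
    {w : Matrix (Fin D) (Fin (N - D)) F |
        w.rank = 1 ∧ (w - yMat F D (N - D)).rank = 1 ∧ (z - w).rank = i + 1} = ∅ :=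
  stmt_18_general F D N i hi1 z hz hzy hc hr hb

end
end
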